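/- arXiv:1603.05803 — 4 statements merged into one kernel-verified Lean document; each statement's English description precedes it below -/
import Mathlib

section
/- For any multiarrangement (A,m) of rank two and any H ∈ A, one has b_2(A,m) = d1·d2 ≥ m(H)·(|m| − m(H)), where (d1,d2) are the exponents of (A,m). -/
open MvPolynomial

/-- The data of a (central) arrangement of hyperplanes in `K^ℓ`:
a finite index set together with pairwise non-proportional nonzero
linear defining forms. -/
structure ArrData (K : Type) [Field K] (ℓ : ℕ) where
  ι : Type
  fin : Fintype ι
  α : ι → MvPolynomial (Fin ℓ) K
  homog : ∀ i, (α i).IsHomogeneous 1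
  nz : ∀ i, α i ≠ 0
  nprop : ∀ i j, i ≠ j → ∀ c : K, α i ≠ c • α j

attribute [instance] ArrData.fin

variable {K : Type} [Field K] {ℓ : ℕ}

abbrev MPoly (K : Type) [Field K] (ℓ : ℕ) := MvPolynomial (Fin ℓ) K

/-- Logarithmic derivation module of the multiarrangement, with the defining
divisibility conditions imposed only for indices in `T`.  -/
def DmodOn (A : ArrData K ℓ) (m : A.ι → ℕ) (T : Set A.ι) :
    Submodule (MPoly K ℓ) (Derivation K (MPoly K ℓ) (MPoly K ℓ)) where
  carrier := {θ | ∀ i ∈ T, A.α i ^ m i ∣ θ (A.α i)}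
  add_mem' := fun ha hb i hi => by
    simpa using dvd_add (ha i hi) (hb i hi)
  zero_mem' := fun i _ => by simp
  smul_mem' := fun c θ hθ i hi => by
    simpa [Derivation.smul_apply, smul_eq_mul] using Dvd.dvd.mul_left (hθ i hi) c

/-- The logarithmic derivation module `D(A,m)`. -/
def Dmod (A : ArrData K ℓ) (m : A.ι → ℕ) :
    Submodule (MPoly K ℓ) (Derivation K (MPoly K ℓ) (MPoly K ℓ)) :=
  DmodOn A m Set.univ

/-- A derivation is homogeneous of polynomial degree `d`. -/
def pdegIs (θ : Derivation K (MPoly K ℓ) (MPoly K ℓ)) (d : ℕ) : Prop :=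
  ∀ t : Fin ℓ, (θ (X t)).IsHomogeneous d

/-- `(A,m)` has a homogeneous basis of its logarithmic derivation module with
polynomial degrees `d 0, …, d (ℓ-1)`; i.e. `(A,m)` is free with exponents `d`. -/
def IsBasisOfDeg (A : ArrData K ℓ) (m : A.ι → ℕ) (d : Fin ℓ → ℕ) : Prop :=
  ∃ b : Module.Basis (Fin ℓ) (MPoly K ℓ) (Dmod A m),
    ∀ j, pdegIs ((b j : Derivation K (MPoly K ℓ) (MPoly K ℓ))) (d j)

/-- `|m|`, the total multiplicity. -/
def totalMult (A : ArrData K ℓ) (m : A.ι → ℕ) : ℕ := ∑ i, m i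

/-- The set of codimension-two flats, encoded by their localizations
(sets of indices of hyperplanes containing the flat). -/
def L2 (A : ArrData K ℓ) : Set (Set A.ι) :=
  {T | ∃ i j, i ≠ j ∧ T = {k | A.α k ∈ Submodule.span K {A.α i, A.α j}}}

/-- The localized multiarrangement at the rank-two flat `T` is free with
exponents `(e, f, 0, …, 0)`. -/
def IsLocExp (A : ArrData K ℓ) (m : A.ι → ℕ) (T : Set A.ι) (e f : ℕ) : Prop :=
  ∃ (b : Module.Basis (Fin ℓ) (MPoly K ℓ) (DmodOn A m T)) (d : Fin ℓ → ℕ),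
    (∀ j, pdegIs ((b j : Derivation K (MPoly K ℓ) (MPoly K ℓ))) (d j)) ∧
    Finset.univ.val.map d = e ::ₘ f ::ₘ Multiset.replicate (ℓ - 2) 0

/-- `b₂` of the localization at a rank-two flat: the product of its two
nontrivial exponents. -/
noncomputable def b2loc (A : ArrData K ℓ) (m : A.ι → ℕ) (T : Set A.ι) : ℕ :=
  sSup {n | ∃ e f, IsLocExp A m T e f ∧ n = e * f}

/-- The second Betti number of `(A,m)`, via the local-global formula
`b₂(A,m) = ∑_{X ∈ L₂(A)} e₁(X)e₂(X)`. -/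
noncomputable def b2m (A : ArrData K ℓ) (m : A.ι → ℕ) : ℕ :=
  ∑ᶠ T ∈ L2 A, b2loc A m T

/-- Setting the first variable to zero. -/
noncomputable def res0 : MvPolynomial (Fin (ℓ+1)) K →ₐ[K] MvPolynomial (Fin ℓ) K :=
  aeval (Fin.cases 0 X)

/-- `(B, mB)` is the multi-Ziegler restriction of `(A, m)` onto the hyperplane
`i0`, in coordinates where `α_{i0} = x₀` and the hyperplane `{x₀ = 0}` is
identified with `K^ℓ` via the last `ℓ` coordinates. -/
def IsMZRes (A : ArrData K (ℓ+1)) (i0 : A.ι) (m : A.ι → ℕ)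
    (B : ArrData K ℓ) (mB : B.ι → ℕ) : Prop :=
  A.α i0 = X 0 ∧
  ∃ r : {j : A.ι // j ≠ i0} → B.ι,
    Function.Surjective r ∧
    (∀ j : {j : A.ι // j ≠ i0}, ∃ c : K, c ≠ 0 ∧
      res0 (A.α j.1) = c • B.α (r j)) ∧
    (∀ k : B.ι, mB k = ∑ᶠ j ∈ {j : {j : A.ι // j ≠ i0} | r j = k}, m j.1)

/-- restriction of a derivation annihilating `x₀` to the hyperplane `{x₀ = 0}`. -/
noncomputable def resDer (θ : Derivation K (MPoly K (ℓ+1)) (MPoly K (ℓ+1))) :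
    Derivation K (MPoly K ℓ) (MPoly K ℓ) :=
  Derivation.mk'
    ((res0 (K := K) (ℓ := ℓ)).toLinearMap ∘ₗ θ.toLinearMap ∘ₗ
      (rename (R := K) (Fin.succ : Fin ℓ → Fin (ℓ+1))).toLinearMap)
    (by
      intro a b
      have h1 : ∀ p : MPoly K ℓ, res0 (K := K) (rename Fin.succ p) = p := by
        intro p
        simp only [res0, aeval_rename]
        have : (Fin.cases 0 X ∘ Fin.succ : Fin ℓ → MPoly K ℓ) = X := by
          funext t; simp
        rw [this]
        simp [aeval_X_left]
      simp only [LinearMap.coe_comp, Function.comp_apply, AlgHom.toLinearMap_apply,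
        Derivation.coeFn_coe, map_mul, Derivation.leibniz, map_add, smul_eq_mul, h1])

/-! Let `θ₀, θ₁` be a homogeneous basis of `D(A,m)` of degrees `d₀, d₁`. The determinant
`θ₀(x₀)θ₁(x₁) − θ₀(x₁)θ₁(x₀)` is a nonzero homogeneous polynomial of degree `d₀ + d₁`
divisible by every `α_H^{m(H)}`, so `|m| ≤ d₀ + d₁`. A nonzero `θ ∈ D(A,m)` of degree `d`
either does not annihilate `α_{H₀}`, and then `α_{H₀}^{m(H₀)}` divides the nonzero polynomial
`θ(α_{H₀})` of degree `d`, so `m(H₀) ≤ d`; or it annihilates `α_{H₀}`, and then each `θ(x_t)`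
is a scalar multiple of `θ(α_H)` for every `H ≠ H₀`, so `∏_{H ≠ H₀} α_H^{m(H)}` divides a
nonzero `θ(x_t)` and `|m| − m(H₀) ≤ d`. These alternatives for `d₀` and `d₁`, together with
`|m| ≤ d₀ + d₁`, force `m(H₀)(|m| − m(H₀)) ≤ d₀d₁`. -/

namespace MvPolynomial.IsHomogeneous

variable {σ : Type*} {p q : MvPolynomial σ K}

theorem le_of_dvd {m n : ℕ} (hp : p.IsHomogeneous m) (hq : q.IsHomogeneous n) (hq0 : q ≠ 0)
    (h : p ∣ q) : m ≤ n := by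
  rw [← hp.totalDegree (ne_zero_of_dvd_ne_zero hq0 h), ← hq.totalDegree hq0]
  exact totalDegree_le_of_dvd_of_isDomain h hq0

theorem irreducible_of_degree_one (hp : p.IsHomogeneous 1) (hp0 : p ≠ 0) : Irreducible p := by
  refine irreducible_of_totalDegree_eq_one (hp.totalDegree hp0) fun x hx => ?_
  obtain ⟨d, hd⟩ := ne_zero_iff.mp hp0
  exact isUnit_iff_ne_zero.mpr (ne_zero_of_dvd_ne_zero hd (hx d))

theorem exists_eq_smul_of_dvd (hp : p.IsHomogeneous 1) (hq : q.IsHomogeneous 1) (hq0 : q ≠ 0)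
    (h : p ∣ q) : ∃ c : K, q = c • p := by
  obtain ⟨r, rfl⟩ := h
  have hr : r.totalDegree = 0 := by
    have := totalDegree_mul_of_isDomain (left_ne_zero_of_mul hq0) (right_ne_zero_of_mul hq0)
    rw [hq.totalDegree hq0, hp.totalDegree (left_ne_zero_of_mul hq0)] at this
    omega
  exact ⟨coeff 0 r, by rw [smul_eq_C_mul, ← totalDegree_eq_zero_iff_eq_C.mp hr, mul_comm]⟩

theorem exists_eq_sum_C_mul_X [Fintype σ] (hp : p.IsHomogeneous 1) :
    ∃ c : σ → K, p = ∑ t, C (c t) * X t := by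
  refine ⟨fun t => coeff 0 (pderiv t p), ?_⟩
  -- Euler's identity, with constant partial derivatives
  conv_lhs => rw [← one_smul ℕ p, ← hp.sum_X_mul_pderiv]
  refine Finset.sum_congr rfl fun t _ => ?_
  rw [mul_comm, ← totalDegree_eq_zero_iff_eq_C.mp
    ((totalDegree_zero_iff_isHomogeneous σ).mpr hp.pderiv)]

end MvPolynomial.IsHomogeneous

theorem MvPolynomial.dvd_C_mul_iff {σ : Type*} {p q : MvPolynomial σ K} {a : K} (ha : a ≠ 0) :
    p ∣ C a * q ↔ p ∣ q :=
  ((isUnit_iff_ne_zero.mpr ha).map C).dvd_mul_left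

theorem MvPolynomial.derivation_apply_C_mul {σ : Type*}
    (D : Derivation K (MvPolynomial σ K) (MvPolynomial σ K)) (a : K) (f : MvPolynomial σ K) :
    D (C a * f) = C a * D f := by
  rw [C_mul', D.map_smul, smul_eq_C_mul]

namespace ArrData

variable (A : ArrData K ℓ) (m : A.ι → ℕ)

theorem isRelPrime {i j : A.ι} (hij : i ≠ j) : IsRelPrime (A.α i) (A.α j) := by
  refine ((A.homog i).irreducible_of_degree_one (A.nz i)).isRelPrime_iff_not_dvd.mpr fun h => ?_
  obtain ⟨c, hc⟩ := (A.homog i).exists_eq_smul_of_dvd (A.homog j) (A.nz j) h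
  exact A.nprop j i hij.symm c hc

theorem sum_le_of_forall_pow_dvd (s : Finset A.ι) {v : MPoly K ℓ} {e : ℕ} (hv : v ≠ 0)
    (hve : v.IsHomogeneous e) (h : ∀ i ∈ s, A.α i ^ m i ∣ v) : ∑ i ∈ s, m i ≤ e := by
  have hprod : (∏ i ∈ s, A.α i ^ m i).IsHomogeneous (∑ i ∈ s, m i) :=
    IsHomogeneous.prod _ _ _ fun i _ => by simpa using (A.homog i).pow (m i)
  refine hprod.le_of_dvd hve hv (Finset.prod_dvd_of_isRelPrime ?_ h)
  exact fun i _ j _ hij => (A.isRelPrime hij).pow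

theorem mem_Dmod_iff {θ : Derivation K (MPoly K ℓ) (MPoly K ℓ)} :
    θ ∈ Dmod A m ↔ ∀ i, A.α i ^ m i ∣ θ (A.α i) :=
  ⟨fun h i => h i trivial, fun h i _ => h i⟩

end ArrData

theorem isHomogeneous_apply_of_pdegIs {θ : Derivation K (MPoly K ℓ) (MPoly K ℓ)} {e : ℕ}
    (hθ : pdegIs θ e) {α : MPoly K ℓ} (hα : α.IsHomogeneous 1) : (θ α).IsHomogeneous e := by
  obtain ⟨c, rfl⟩ := hα.exists_eq_sum_C_mul_X
  simp only [map_sum, derivation_apply_C_mul]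
  exact IsHomogeneous.sum _ _ _ fun t _ => (hθ t).C_mul _

section RankTwo

variable {θ η : Derivation K (MPoly K 2) (MPoly K 2)} {α : MPoly K 2}

theorem exists_eq_C_mul_X_add_C_mul_X (hα : α.IsHomogeneous 1) :
    ∃ a c : K, α = C a * X 0 + C c * X 1 := by
  obtain ⟨c, hc⟩ := hα.exists_eq_sum_C_mul_X
  exact ⟨c 0, c 1, by rw [hc, Fin.sum_univ_two]⟩

theorem sub_mul_ne_zero_of_forall_ne_smul {a c a' c' : K}
    (hβ0 : C a' * X 0 + C c' * X 1 ≠ (0 : MPoly K 2))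
    (h : ∀ k : K, (C a * X 0 + C c * X 1 : MPoly K 2) ≠ k • (C a' * X 0 + C c' * X 1)) :
    a * c' - c * a' ≠ 0 := by
  intro hδ
  have hC : C a * C c' - C c * C a' = (0 : MPoly K 2) := by
    rw [← map_mul, ← map_mul, ← map_sub, hδ, map_zero]
  have not_smul_eq : ∀ x y : K, x ≠ 0 →
      x • (C a * X 0 + C c * X 1 : MPoly K 2) ≠ y • (C a' * X 0 + C c' * X 1) :=
    fun x y hx hxy => h (y / x) (by
      rw [div_eq_inv_mul, mul_smul, eq_inv_smul_iff₀ hx]; exact hxy)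
  by_cases ha' : a' = 0
  · have hc' : c' ≠ 0 := by rintro rfl; exact hβ0 (by simp [ha'])
    refine not_smul_eq c' c hc' ?_
    simp only [smul_add, smul_eq_C_mul]
    linear_combination X 0 * hC
  · refine not_smul_eq a' a ha' ?_
    simp only [smul_add, smul_eq_C_mul]
    linear_combination -(X 1 * hC)

theorem dvd_apply_X_of_apply_eq_zero {β : MPoly K 2} (hα : α.IsHomogeneous 1)
    (hβ : β.IsHomogeneous 1) (hβ0 : β ≠ 0) (hαβ : ∀ c : K, α ≠ c • β) (hθβ : θ β = 0)
    {p : MPoly K 2} (hp : p ∣ θ α) (t : Fin 2) : p ∣ θ (X t) := by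
  obtain ⟨a, c, rfl⟩ := exists_eq_C_mul_X_add_C_mul_X hα
  obtain ⟨a', c', rfl⟩ := exists_eq_C_mul_X_add_C_mul_X hβ
  simp only [map_add, derivation_apply_C_mul] at hp hθβ
  rw [← dvd_C_mul_iff (sub_mul_ne_zero_of_forall_ne_smul hβ0 hαβ)]
  match t with
  | 0 =>
    have : C (a * c' - c * a') * θ (X 0) = C c' * (C a * θ (X 0) + C c * θ (X 1)) -
        C c * (C a' * θ (X 0) + C c' * θ (X 1)) := by
      simp only [map_sub, map_mul]; ring
    rw [this, hθβ, mul_zero, sub_zero]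
    exact hp.mul_left _
  | 1 =>
    have : C (a * c' - c * a') * θ (X 1) = C a * (C a' * θ (X 0) + C c' * θ (X 1)) -
        C a' * (C a * θ (X 0) + C c * θ (X 1)) := by
      simp only [map_sub, map_mul]; ring
    rw [this, hθβ, mul_zero, zero_sub, dvd_neg]
    exact hp.mul_left _

theorem dvd_det_of_dvd_apply (hα : α.IsHomogeneous 1) (hα0 : α ≠ 0) {p : MPoly K 2}
    (hθ : p ∣ θ α) (hη : p ∣ η α) : p ∣ θ (X 0) * η (X 1) - θ (X 1) * η (X 0) := by
  obtain ⟨a, c, rfl⟩ := exists_eq_C_mul_X_add_C_mul_X hα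
  simp only [map_add, derivation_apply_C_mul] at hθ hη
  by_cases ha : a = 0
  · have hc : c ≠ 0 := by rintro rfl; exact hα0 (by simp [ha])
    rw [← dvd_C_mul_iff hc]
    have : C c * (θ (X 0) * η (X 1) - θ (X 1) * η (X 0)) =
        θ (X 0) * (C a * η (X 0) + C c * η (X 1)) - η (X 0) * (C a * θ (X 0) + C c * θ (X 1)) := by
      ring
    rw [this]
    exact dvd_sub (hη.mul_left _) (hθ.mul_left _)
  · rw [← dvd_C_mul_iff ha]
    have : C a * (θ (X 0) * η (X 1) - θ (X 1) * η (X 0)) =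
        η (X 1) * (C a * θ (X 0) + C c * θ (X 1)) - θ (X 1) * (C a * η (X 0) + C c * η (X 1)) := by
      ring
    rw [this]
    exact dvd_sub (hθ.mul_left _) (hη.mul_left _)

theorem det_ne_zero_of_linearIndependent (h : LinearIndependent (MPoly K 2) ![θ, η]) :
    θ (X 0) * η (X 1) - θ (X 1) * η (X 0) ≠ 0 := by
  intro hD
  have h0 := h.eq_zero_of_pair' (s := η (X 0)) (t := θ (X 0)) <| derivation_ext <|
    Fin.forall_fin_two.mpr ⟨by simp only [Derivation.smul_apply, smul_eq_mul]; ring,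
      by simp only [Derivation.smul_apply, smul_eq_mul]; linear_combination -hD⟩
  have h1 := h.eq_zero_of_pair' (s := η (X 1)) (t := θ (X 1)) <| derivation_ext <|
    Fin.forall_fin_two.mpr
      ⟨by simp only [Derivation.smul_apply, smul_eq_mul]; linear_combination hD,
        by simp only [Derivation.smul_apply, smul_eq_mul]; ring⟩
  exact h.ne_zero 0 (derivation_ext <| Fin.forall_fin_two.mpr ⟨by simp [h0.2], by simp [h1.2]⟩)

end RankTwo

namespace ArrData

variable (A : ArrData K 2) (m : A.ι → ℕ)

theorem le_or_totalMult_sub_le {θ : Derivation K (MPoly K 2) (MPoly K 2)} (hθ : θ ∈ Dmod A m)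
    (hθ0 : θ ≠ 0) {e : ℕ} (he : pdegIs θ e) (i0 : A.ι) :
    m i0 ≤ e ∨ totalMult A m - m i0 ≤ e := by
  classical
  rw [mem_Dmod_iff] at hθ
  by_cases h0 : θ (A.α i0) = 0
  · right
    obtain ⟨t, ht⟩ : ∃ t, θ (X t) ≠ 0 := by
      by_contra! h
      exact hθ0 (derivation_ext fun t => by simpa using h t)
    have := A.sum_le_of_forall_pow_dvd m (Finset.univ.erase i0) ht (he t) fun i hi =>
      dvd_apply_X_of_apply_eq_zero (A.homog i) (A.homog i0) (A.nz i0)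
        (A.nprop i i0 (Finset.ne_of_mem_erase hi)) h0 (hθ i) t
    rwa [totalMult, ← Finset.sum_erase_add _ _ (Finset.mem_univ i0), Nat.add_sub_cancel]
  · left
    have hpow : (A.α i0 ^ m i0).IsHomogeneous (m i0) := by
      simpa using (A.homog i0).pow (m i0)
    exact hpow.le_of_dvd (isHomogeneous_apply_of_pdegIs he (A.homog i0)) h0 (hθ i0)

theorem totalMult_le_add {d : Fin 2 → ℕ} (b : Module.Basis (Fin 2) (MPoly K 2) (Dmod A m))
    (hb : ∀ j, pdegIs (b j : Derivation K (MPoly K 2) (MPoly K 2)) (d j)) :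
    totalMult A m ≤ d 0 + d 1 := by
  have hli : LinearIndependent (MPoly K 2) ![(b 0).1, (b 1).1] := by
    have h := b.linearIndependent.map_injOn (Dmod A m).subtype (Dmod A m).injective_subtype.injOn
    rwa [show (Dmod A m).subtype ∘ b = ![(b 0).1, (b 1).1] from
      funext <| Fin.forall_fin_two.mpr ⟨rfl, rfl⟩] at h
  refine A.sum_le_of_forall_pow_dvd m Finset.univ (det_ne_zero_of_linearIndependent hli)
    (((hb 0 0).mul (hb 1 1)).sub ((hb 0 1).mul (hb 1 0))) fun i _ => ?_
  exact dvd_det_of_dvd_apply (A.homog i) (A.nz i) ((A.mem_Dmod_iff m).mp (b 0).2 i)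
    ((A.mem_Dmod_iff m).mp (b 1).2 i)

end ArrData

theorem Nat.mul_le_mul_of_le_or_le {p q x y : ℕ} (hx : p ≤ x ∨ q ≤ x) (hy : p ≤ y ∨ q ≤ y)
    (hxy : p + q ≤ x + y) : p * q ≤ x * y := by
  rcases hx with hx | hx <;> rcases hy with hy | hy
  · nlinarith
  · exact Nat.mul_le_mul hx hy
  · rw [Nat.mul_comm p]; exact Nat.mul_le_mul hx hy
  · nlinarith

theorem stmt1_general {K : Type} [Field K] (A : ArrData K 2) (m : A.ι → ℕ)
    (d : Fin 2 → ℕ)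
    (hfree : IsBasisOfDeg A m d) (i0 : A.ι) :
    m i0 * (totalMult A m - m i0) ≤ d 0 * d 1 := by
  obtain ⟨b, hb⟩ := hfree
  have hdeg : ∀ j, m i0 ≤ d j ∨ totalMult A m - m i0 ≤ d j := fun j =>
    A.le_or_totalMult_sub_le m (b j).2 (by simpa using b.ne_zero j) (hb j) i0
  have hsum : m i0 + (totalMult A m - m i0) ≤ d 0 + d 1 := by
    rw [Nat.add_sub_cancel' (show m i0 ≤ totalMult A m from
      Finset.single_le_sum (fun i _ => Nat.zero_le (m i)) (Finset.mem_univ i0))]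
    exact A.totalMult_le_add m b hb
  exact Nat.mul_le_mul_of_le_or_le (hdeg 0) (hdeg 1) hsum

/-- For a rank-two multiarrangement,
`b₂(A,m) = d₀·d₁ ≥ m(H)(|m| − m(H))`. -/
theorem stmt1 {K : Type} [Field K] (A : ArrData K 2) (m : A.ι → ℕ)
    (hm : ∀ i, 0 < m i) (d : Fin 2 → ℕ)
    (hfree : IsBasisOfDeg A m d) (i0 : A.ι) :
    m i0 * (totalMult A m - m i0) ≤ d 0 * d 1 :=
  stmt1_general A m d hfree i0
end

section
/- Let (A,m) be a multiarrangement, H_0 ∈ A with defining form α_{H_0}, and let δ ∈ D_0^p(A,m) := {δ ∈ D^p(A,m) : δ(α_{H_0}, f_2,…,f_p) = 0 for all f_i ∈ S}. Then the restriction δ|_{H_0} belongs to D^p(A^{H_0}, m^{H_0}), where (A^{H_0}, m^{H_0}) is the multi-Ziegler restriction. In particular there is a well-defined restriction map res^p : D_0^p(A,m) → D^p(A^{H_0}, m^{H_0}). -/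
open MvPolynomial

variable {K : Type} [Field K] {ℓ : ℕ}

/-- `θ` is an alternating multiderivation of arity `p` (an element of `Der^p(S)`). -/
def IsMultiDer {K : Type} [Field K] {ℓ p : ℕ}
    (θ : (Fin p → MPoly K ℓ) → MPoly K ℓ) : Prop :=
  (∀ (v : Fin p → MPoly K ℓ) (i j : Fin p), i ≠ j → v i = v j → θ v = 0) ∧
  (∀ (s : Fin p) (v : Fin p → MPoly K ℓ) (a : K) (f g : MPoly K ℓ),
      θ (Function.update v s (a • f + g)) =
        a • θ (Function.update v s f) + θ (Function.update v s g)) ∧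
  (∀ (s : Fin p) (v : Fin p → MPoly K ℓ) (f g : MPoly K ℓ),
      θ (Function.update v s (f * g)) =
        f * θ (Function.update v s g) + g * θ (Function.update v s f))

/-- Membership in `D^p(A,m)`. -/
def InDp {K : Type} [Field K] {ℓ : ℕ} (A : ArrData K ℓ) (m : A.ι → ℕ) {p : ℕ}
    (θ : (Fin p → MPoly K ℓ) → MPoly K ℓ) : Prop :=
  IsMultiDer θ ∧
  ∀ (i : A.ι) (s : Fin p) (v : Fin p → MPoly K ℓ),
    A.α i ^ m i ∣ θ (Function.update v s (A.α i))

/-!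
Fix a hyperplane of the restriction, with form `β`, and let `α_j` be the forms of the
hyperplanes restricting to it: `α_j|_{x₀=0} = c_j β` with `c_j ≠ 0`. Being linear,
`α_j = c_j β + a_j x₀`. As `θ` is alternating and vanishes with `x₀` in the first slot, it
vanishes with `x₀` in any slot, so `θ(…, α_j, …) = c_j θ(…, β, …)` and every `α_j ^ m_j`
divides `θ(…, β, …)`. The `α_j` are pairwise non-associated primes, so their product divides
it as well, and setting `x₀ = 0` sends that product to a unit times `β ^ ∑ m_j`.
-/

theorem MvPolynomial.IsHomogeneous.irreducible_of_degree_one_s3 {K σ : Type*} [Field K]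
    {q : MvPolynomial σ K} (hq : q.IsHomogeneous 1) (hq0 : q ≠ 0) : Irreducible q := by
  have hdeg : q.totalDegree = 1 := hq.totalDegree hq0
  have isUnit_of_degree_zero : ∀ a : MvPolynomial σ K, a ≠ 0 → a.totalDegree = 0 → IsUnit a :=
    fun a ha h0 => by
      rw [totalDegree_eq_zero_iff_eq_C] at h0
      rw [h0]
      exact (Ne.isUnit fun hc => ha (by rw [h0, hc, C_0])).map C
  refine ⟨fun hu => ?_, fun a b hab => ?_⟩
  · simp [(isUnit_iff_totalDegree_of_isReduced.mp hu).2] at hdeg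
  · subst hab
    have ha : a ≠ 0 := left_ne_zero_of_mul hq0
    have hb : b ≠ 0 := right_ne_zero_of_mul hq0
    rw [totalDegree_mul_of_isDomain ha hb] at hdeg
    rcases Nat.add_eq_one_iff.mp hdeg with ⟨h0, -⟩ | ⟨-, h0⟩
    · exact .inl (isUnit_of_degree_zero a ha h0)
    · exact .inr (isUnit_of_degree_zero b hb h0)

theorem MvPolynomial.IsHomogeneous.exists_eq_C_mul_X_of_X_dvd {R σ : Type*} [CommRing R]
    [IsDomain R] {q : MvPolynomial σ R} (hq : q.IsHomogeneous 1) {i : σ} (h : X i ∣ q) :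
    ∃ a : R, q = C a * X i := by
  obtain ⟨g, rfl⟩ := h
  rcases eq_or_ne g 0 with rfl | hg
  · exact ⟨0, by simp⟩
  have hdeg := hq.totalDegree (mul_ne_zero (X_ne_zero i) hg)
  rw [totalDegree_mul_of_isDomain (X_ne_zero i) hg, totalDegree_X] at hdeg
  exact ⟨coeff 0 g, by rw [mul_comm, ← totalDegree_eq_zero_iff_eq_C.mp (by omega)]⟩

@[simp]
theorem res0_rename_succ (q : MPoly K ℓ) : res0 (rename Fin.succ q) = q := by
  rw [res0, aeval_rename]
  convert aeval_X_left_apply q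
  ext t
  simp

theorem res0_eq_eval_zero_finSuccEquiv (q : MPoly K (ℓ+1)) :
    res0 q = (finSuccEquiv K ℓ q).eval 0 := by
  have : res0 = ((Polynomial.aeval (0 : MPoly K ℓ)).restrictScalars K).comp
      (finSuccEquiv K ℓ).toAlgHom := by
    ext i : 1
    cases i using Fin.cases <;> simp [res0, finSuccEquiv_X_zero, finSuccEquiv_X_succ]
  rw [this]
  simp

theorem X_zero_dvd_iff_res0_eq_zero (q : MPoly K (ℓ+1)) : X 0 ∣ q ↔ res0 q = 0 := by
  rw [res0_eq_eval_zero_finSuccEquiv, ← Polynomial.coeff_zero_eq_eval_zero, ← Polynomial.X_dvd_iff,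
    ← finSuccEquiv_X_zero, map_dvd_iff]

theorem exists_eq_smul_rename_add_C_mul_X_zero {α : MPoly K (ℓ+1)} {β : MPoly K ℓ}
    (hα : α.IsHomogeneous 1) (hβ : β.IsHomogeneous 1) {c : K} (h : res0 α = c • β) :
    ∃ a : K, α = c • rename Fin.succ β + C a * X 0 := by
  have hker : X 0 ∣ α - c • rename Fin.succ β := by
    rw [X_zero_dvd_iff_res0_eq_zero, map_sub, map_smul, res0_rename_succ, h, sub_self]
  have hhom : (α - c • rename Fin.succ β).IsHomogeneous 1 := by
    rw [smul_eq_C_mul]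
    exact hα.sub ((hβ.rename_isHomogeneous).C_mul c)
  obtain ⟨a, ha⟩ := hhom.exists_eq_C_mul_X_of_X_dvd hker
  exact ⟨a, eq_add_of_sub_eq' ha⟩

theorem ArrData.prime_α (A : ArrData K ℓ) (i : A.ι) : Prime (A.α i) :=
  ((A.homog i).irreducible_of_degree_one_s3 (A.nz i)).prime

theorem ArrData.not_dvd_α (A : ArrData K ℓ) {i j : A.ι} (hij : i ≠ j) : ¬ A.α i ∣ A.α j := by
  intro h
  obtain ⟨u, hu⟩ := (A.prime_α i).associated_of_dvd (A.prime_α j) h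
  obtain ⟨c, -, hc⟩ := isUnit_iff_eq_C_of_isReduced.mp u.isUnit
  exact A.nprop j i hij.symm c (by rw [← hu, hc, smul_eq_C_mul, mul_comm])

theorem ArrData.prod_pow_dvd (A : ArrData K ℓ) (m : A.ι → ℕ) {ι : Type*} {e : ι → A.ι}
    (he : Function.Injective e) (s : Finset ι) {x : MPoly K ℓ}
    (h : ∀ i ∈ s, A.α (e i) ^ m (e i) ∣ x) : ∏ i ∈ s, A.α (e i) ^ m (e i) ∣ x :=
  Finset.prod_dvd_of_isRelPrime (fun i _ _ _ hij =>
    (((A.prime_α (e i)).irreducible.isRelPrime_iff_not_dvd).mpr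
      (A.not_dvd_α (he.ne hij))).pow) h

/-- The paper's `δ|_{H₀}` for `H₀ = {x₀ = 0}`. -/
noncomputable def restrictMultiDer {p : ℕ} (θ : (Fin p → MPoly K (ℓ+1)) → MPoly K (ℓ+1)) :
    (Fin p → MPoly K ℓ) → MPoly K ℓ :=
  fun v => res0 (θ (fun s => rename Fin.succ (v s)))

theorem restrictMultiDer_update {p : ℕ} (θ : (Fin p → MPoly K (ℓ+1)) → MPoly K (ℓ+1))
    (v : Fin p → MPoly K ℓ) (s : Fin p) (f : MPoly K ℓ) :
    restrictMultiDer θ (Function.update v s f) =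
      res0 (θ (Function.update (fun t => rename Fin.succ (v t)) s (rename Fin.succ f))) :=
  congrArg (fun w => res0 (θ w)) (Function.comp_update (rename Fin.succ) v s f)

namespace IsMultiDer

variable {p : ℕ} {θ : (Fin p → MPoly K ℓ) → MPoly K ℓ}

theorem map_update_zero (hθ : IsMultiDer θ) (v : Fin p → MPoly K ℓ) (s : Fin p) :
    θ (Function.update v s 0) = 0 := by
  simpa using hθ.2.1 s v 1 0 0

def toAlternatingMap (hθ : IsMultiDer θ) : MPoly K ℓ [⋀^Fin p]→ₗ[K] MPoly K ℓ where
  toFun := θ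
  map_update_add' {inst} v s f g := by
    obtain rfl := Subsingleton.elim inst (instDecidableEqFin p)
    simpa using hθ.2.1 s v 1 f g
  map_update_smul' {inst} v s a f := by
    obtain rfl := Subsingleton.elim inst (instDecidableEqFin p)
    simpa [hθ.map_update_zero] using hθ.2.1 s v a f 0
  map_eq_zero_of_eq' v i j hv hij := hθ.1 v i j hij hv

@[simp]
theorem toAlternatingMap_apply (hθ : IsMultiDer θ) (v : Fin p → MPoly K ℓ) :
    hθ.toAlternatingMap v = θ v :=
  rfl

theorem map_update_eq_zero_of_forall_cons {θ : (Fin (p+1) → MPoly K ℓ) → MPoly K ℓ}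
    (hθ : IsMultiDer θ) {a : MPoly K ℓ} (h : ∀ v, θ (Fin.cons a v) = 0)
    (w : Fin (p+1) → MPoly K ℓ) (s : Fin (p+1)) : θ (Function.update w s a) = 0 := by
  have hswap := hθ.toAlternatingMap.map_perm (Function.update w s a) (Equiv.swap 0 s)
  have hhead : (Function.update w s a ∘ Equiv.swap 0 s) 0 = a := by simp
  rw [toAlternatingMap_apply, toAlternatingMap_apply, ← Fin.cons_self_tail
    (Function.update w s a ∘ Equiv.swap 0 s), hhead, h] at hswap
  exact (smul_eq_zero_iff_eq _).mp hswap.symm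

theorem restrict {θ : (Fin p → MPoly K (ℓ+1)) → MPoly K (ℓ+1)} (hθ : IsMultiDer θ) :
    IsMultiDer (restrictMultiDer θ) := by
  obtain ⟨halt, hlin, hleib⟩ := hθ
  refine ⟨fun v i j hij hv => ?_, fun s v a f g => ?_, fun s v f g => ?_⟩
  · rw [restrictMultiDer, halt _ i j hij (by simp [hv]), map_zero]
  · simp only [restrictMultiDer_update, map_add, map_smul, hlin]
  · simp only [restrictMultiDer_update, map_mul, hleib, map_add, res0_rename_succ]

theorem map_update_eq_smul_of_res0_eq {θ : (Fin (p+1) → MPoly K (ℓ+1)) → MPoly K (ℓ+1)}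
    (hθ : IsMultiDer θ) (h0 : ∀ v, θ (Fin.cons (X 0) v) = 0) {α : MPoly K (ℓ+1)} {β : MPoly K ℓ}
    (hα : α.IsHomogeneous 1) (hβ : β.IsHomogeneous 1) {c : K} (h : res0 α = c • β)
    (V : Fin (p+1) → MPoly K (ℓ+1)) (s : Fin (p+1)) :
    θ (Function.update V s α) = c • θ (Function.update V s (rename Fin.succ β)) := by
  obtain ⟨a, rfl⟩ := exists_eq_smul_rename_add_C_mul_X_zero hα hβ h
  have hX0 := hθ.map_update_eq_zero_of_forall_cons h0 V s
  rw [← smul_eq_C_mul, ← toAlternatingMap_apply hθ, AlternatingMap.map_update_add,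
    AlternatingMap.map_update_smul, AlternatingMap.map_update_smul, toAlternatingMap_apply,
    toAlternatingMap_apply, hX0, smul_zero, add_zero]

end IsMultiDer

theorem InDp.pow_dvd_map_update_rename {A : ArrData K (ℓ+1)} {m : A.ι → ℕ} {p : ℕ}
    {θ : (Fin (p+1) → MPoly K (ℓ+1)) → MPoly K (ℓ+1)} (hθ : InDp A m θ)
    (h0 : ∀ v, θ (Fin.cons (X 0) v) = 0) {j : A.ι} {β : MPoly K ℓ} (hβ : β.IsHomogeneous 1)
    {c : K} (hc0 : c ≠ 0) (hc : res0 (A.α j) = c • β) (V : Fin (p+1) → MPoly K (ℓ+1))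
    (s : Fin (p+1)) : A.α j ^ m j ∣ θ (Function.update V s (rename Fin.succ β)) := by
  have hj := hθ.2 j s V
  rwa [hθ.1.map_update_eq_smul_of_res0_eq h0 (A.homog j) hβ hc, smul_eq_C_mul,
    IsUnit.dvd_mul_left (hc0.isUnit.map C)] at hj

theorem stmt3_general {K : Type} [Field K] {ℓ : ℕ} (A : ArrData K (ℓ+1)) (m : A.ι → ℕ)
    (i0 : A.ι)
    (B : ArrData K ℓ) (mB : B.ι → ℕ) (hres : IsMZRes A i0 m B mB)
    (p : ℕ) (θ : (Fin (p+1) → MPoly K (ℓ+1)) → MPoly K (ℓ+1))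
    (hθ : InDp A m θ)
    (h0 : ∀ v : Fin p → MPoly K (ℓ+1), θ (Fin.cons (A.α i0) v) = 0) :
    InDp B mB (fun v : Fin (p+1) → MPoly K ℓ =>
      res0 (θ (fun s => rename Fin.succ (v s)))) := by
  classical
  obtain ⟨hα0, r, -, hr, hmB⟩ := hres
  rw [hα0] at h0
  choose c hc0 hc using hr
  refine ⟨hθ.1.restrict, fun k s v => ?_⟩
  set F := θ (Function.update (fun t => rename Fin.succ (v t)) s (rename Fin.succ (B.α k)))
  set J := Finset.univ.filter (fun j => r j = k)
  have hcJ : ∀ j ∈ J, res0 (A.α j) = c j • B.α k := fun j hj => by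
    rw [hc j, (Finset.mem_filter.mp hj).2]
  have hdvd : ∀ j ∈ J, A.α j ^ m j ∣ F := fun j hj =>
    hθ.pow_dvd_map_update_rename h0 (B.homog k) (hc0 j) (hcJ j hj) _ s
  have hprod := map_dvd res0 (A.prod_pow_dvd m Subtype.val_injective J hdvd)
  calc B.α k ^ mB k = ∏ j ∈ J, B.α k ^ m j := by
        rw [Finset.prod_pow_eq_pow_sum, hmB, ← finsum_mem_coe_finset, Finset.coe_filter]
        simp
    _ ∣ ∏ j ∈ J, res0 (A.α j ^ m j) := Finset.prod_dvd_prod_of_dvd _ _ fun j hj => by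
        rw [map_pow, hcJ j hj, smul_eq_C_mul]
        exact pow_dvd_pow_of_dvd (dvd_mul_left _ _) _
    _ ∣ res0 F := by rwa [map_prod] at hprod
    _ = restrictMultiDer θ (Function.update v s (B.α k)) := (restrictMultiDer_update ..).symm

/-- If `δ ∈ D₀^p(A,m)` (i.e. `δ(α_{H₀},·,…,·) = 0`), then its
restriction to `H₀ = {x₀ = 0}` lies in `D^p` of the multi-Ziegler restriction;
in particular the restriction map `res^p` is well defined. -/
theorem stmt3 {K : Type} [Field K] {ℓ : ℕ} (A : ArrData K (ℓ+1)) (m : A.ι → ℕ)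
    (hm : ∀ i, 0 < m i) (i0 : A.ι)
    (B : ArrData K ℓ) (mB : B.ι → ℕ) (hres : IsMZRes A i0 m B mB)
    (p : ℕ) (θ : (Fin (p+1) → MPoly K (ℓ+1)) → MPoly K (ℓ+1))
    (hθ : InDp A m θ)
    (h0 : ∀ v : Fin p → MPoly K (ℓ+1), θ (Fin.cons (A.α i0) v) = 0) :
    InDp B mB (fun v : Fin (p+1) → MPoly K ℓ =>
      res0 (θ (fun s => rename Fin.succ (v s)))) :=
  stmt3_general A m i0 B mB hres p θ hθ h0
end

section
/- Let (A,m) be a multiarrangement with H_0 ∈ A, and suppose (A,m) has a good summand to H_0. If θ_0 is the good summand, then every θ ∈ D(A,m) decomposes uniquely as θ = θ' + f·θ_0 with f = θ(α_{H_0})/α_{H_0}^{m_0} ∈ S and θ' ∈ D_0(A,m); hence D(A,m) = S·θ_0 ⊕ D_0(A,m). -/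
open MvPolynomial

variable {K : Type} [Field K] {ℓ : ℕ}

theorem Submodule.existsUnique_add_smul_of_dvd_apply {R M : Type*} [CommRing R]
    [AddCommGroup M] [Module R M] (N : Submodule R M) (φ : M →ₗ[R] R) {a : R}
    (ha : IsLeftRegular a) {θ₀ : M} (hθ₀ : θ₀ ∈ N) (hφθ₀ : φ θ₀ = a)
    {θ : M} (hθ : θ ∈ N) (hdvd : a ∣ φ θ) :
    ∃! q : R × M, q.2 ∈ N ∧ φ q.2 = 0 ∧ θ = q.2 + q.1 • θ₀ ∧ a * q.1 = φ θ := by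
  obtain ⟨f, hf⟩ := hdvd
  refine ⟨(f, θ - f • θ₀),
    ⟨N.sub_mem hθ (N.smul_mem f hθ₀), ?_, (sub_add_cancel θ _).symm, hf.symm⟩, ?_⟩
  · rw [map_sub, map_smul, hφθ₀, hf, smul_eq_mul, mul_comm, sub_self]
  · rintro ⟨g, θ'⟩ ⟨-, -, rfl, hg⟩
    obtain rfl : g = f := ha (hg.trans hf)
    simp

def Derivation.evalₗ {R A M : Type*} [CommSemiring R] [CommSemiring A] [AddCommMonoid M]
    [Algebra R A] [Module A M] [Module R M] [SMulCommClass R A M] (x : A) :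
    Derivation R A M →ₗ[A] M where
  toFun D := D x
  map_add' _ _ := rfl
  map_smul' _ _ := rfl

theorem stmt6_general {K : Type} [Field K] {ℓ : ℕ} (A : ArrData K ℓ) (m : A.ι → ℕ) (i0 : A.ι)
    (θ0 : Derivation K (MPoly K ℓ) (MPoly K ℓ)) (hθ0 : θ0 ∈ Dmod A m)
    (hgs : θ0 (A.α i0) = A.α i0 ^ m i0) :
    ∀ θ ∈ Dmod A m,
      ∃! q : MPoly K ℓ × Derivation K (MPoly K ℓ) (MPoly K ℓ),
        q.2 ∈ Dmod A m ∧ q.2 (A.α i0) = 0 ∧ θ = q.2 + q.1 • θ0 ∧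
        A.α i0 ^ m i0 * q.1 = θ (A.α i0) := fun _ hθ =>
  (Dmod A m).existsUnique_add_smul_of_dvd_apply (Derivation.evalₗ (A.α i0))
    (IsRegular.of_ne_zero (pow_ne_zero _ (A.nz i0))).left hθ0 hgs hθ
    (hθ i0 (Set.mem_univ i0))

/-- A good summand `θ₀` to `i0` yields a unique decomposition
`θ = θ' + f·θ₀` with `θ' ∈ D₀(A,m)` and `f = θ(α_{H₀})/α_{H₀}^{m₀}`; hence
`D(A,m) = S·θ₀ ⊕ D₀(A,m)`. -/
theorem stmt6 {K : Type} [Field K] {ℓ : ℕ} (A : ArrData K ℓ) (m : A.ι → ℕ)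
    (hm : ∀ i, 0 < m i) (i0 : A.ι)
    (θ0 : Derivation K (MPoly K ℓ) (MPoly K ℓ)) (hθ0 : θ0 ∈ Dmod A m)
    (hpd : pdegIs θ0 (m i0)) (hgs : θ0 (A.α i0) = A.α i0 ^ m i0) :
    ∀ θ ∈ Dmod A m,
      ∃! q : MPoly K ℓ × Derivation K (MPoly K ℓ) (MPoly K ℓ),
        q.2 ∈ Dmod A m ∧ q.2 (A.α i0) = 0 ∧ θ = q.2 + q.1 • θ0 ∧
        A.α i0 ^ m i0 * q.1 = θ (A.α i0) :=
  stmt6_general A m i0 θ0 hθ0 hgs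
end

section
/- Let (A,m) be a multiarrangement with a good summand θ_0 to H_0 ∈ A, and define the contraction maps ∂ : D^p(A,m) → D^{p−1}(A,m) by ∂(θ)(f_2,…,f_p) = θ(α_{H_0}, f_2,…,f_p)/α_{H_0}^{m_0}. Then ∂∘∂ = 0 and the resulting complex 0 → D^ℓ(A,m) → D^{ℓ−1}(A,m) → ⋯ → D^0(A,m) → 0 is acyclic (exact), with explicit contracting homotopy δ ↦ θ_0 ∧ δ. -/
open MvPolynomial

variable {K : Type} [Field K] {ℓ : ℕ}

/-!
`∂ ∘ ∂ = 0` because elements of `D^p(A,m)` are alternating. The contracting homotopy is the wedge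
product with the good summand, `(θ₀ ∧ θ)(v₀, …, v_p) = ∑ₖ (-1)ᵏ θ₀(vₖ) θ(v₀, …, v̂ₖ, …, v_p)`: it is
a derivation in each slot and satisfies the divisibility conditions because `θ₀ ∈ D(A,m)` and
`θ ∈ D^p(A,m)` do, and inserting `α_{H₀}` in the first slot kills every term but
`θ₀(α_{H₀}) θ = α_{H₀}^{m₀} θ` as soon as `∂θ = 0`. In degree `0`, `f θ₀` is a preimage of `f`.
-/

open Fin Function

section WedgeDerivation

variable {R S : Type*} [CommRing R] [CommRing S] [Algebra R S] {n : ℕ}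

def IsLeibnizInEachSlot (θ : (Fin n → S) → S) : Prop :=
  ∀ (s : Fin n) (v : Fin n → S) (f g : S),
    θ (update v s (f * g)) = f * θ (update v s g) + g * θ (update v s f)

noncomputable def wedgeDer (D : Derivation R S S) (Θ : S [⋀^Fin n]→ₗ[R] S) :
    S [⋀^Fin (n + 1)]→ₗ[R] S :=
  AlternatingMap.alternatizeUncurryFin
    { toFun := fun x => D x • Θ
      map_add' := fun x y => by rw [map_add, add_smul]
      map_smul' := fun c x => by ext; simp }

variable (D : Derivation R S S)

theorem wedgeDer_apply (Θ : S [⋀^Fin n]→ₗ[R] S) (v : Fin (n + 1) → S) :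
    wedgeDer D Θ v = ∑ k : Fin (n + 1), (-1) ^ (k : ℕ) * (D (v k) * Θ (k.removeNth v)) := by
  simp [wedgeDer, AlternatingMap.alternatizeUncurryFin_apply]

theorem isLeibnizInEachSlot_wedgeDer {Θ : S [⋀^Fin n]→ₗ[R] S} (hΘ : IsLeibnizInEachSlot Θ) :
    IsLeibnizInEachSlot (wedgeDer D Θ) := by
  intro s v f g
  simp only [wedgeDer_apply, Finset.mul_sum, ← Finset.sum_add_distrib]
  refine Finset.sum_congr rfl fun k _ => ?_
  rcases eq_or_ne k s with rfl | hks
  · simp only [update_self, removeNth_update, D.leibniz, smul_eq_mul]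
    ring
  · obtain ⟨s, rfl⟩ := exists_succAbove_eq hks.symm
    simp only [update_of_ne (succAbove_ne k s).symm, removeNth_update_succAbove, hΘ s]
    ring

theorem dvd_wedgeDer_update {Θ : S [⋀^Fin n]→ₗ[R] S} {a c : S} (hD : c ∣ D a)
    (hΘ : ∀ (s : Fin n) (v : Fin n → S), c ∣ Θ (update v s a))
    (s : Fin (n + 1)) (v : Fin (n + 1) → S) : c ∣ wedgeDer D Θ (update v s a) := by
  rw [wedgeDer_apply]
  refine Finset.dvd_sum fun k _ => Dvd.dvd.mul_left ?_ _
  rcases eq_or_ne k s with rfl | hks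
  · rw [update_self]
    exact hD.mul_right _
  · obtain ⟨s, rfl⟩ := exists_succAbove_eq hks.symm
    rw [update_of_ne (succAbove_ne k s).symm, removeNth_update_succAbove]
    exact (hΘ s _).mul_left _

theorem wedgeDer_cons {Θ : S [⋀^Fin (n + 1)]→ₗ[R] S} {a : S}
    (hΘ : ∀ w : Fin n → S, Θ (cons a w) = 0) (v : Fin (n + 1) → S) :
    wedgeDer D Θ (cons a v) = D a * Θ v := by
  have hsucc (k : Fin (n + 1)) :
      k.succ.removeNth (cons a v : Fin (n + 2) → S) = cons a (k.removeNth v) :=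
    cons_comp_succ_succAbove a v k
  simp [wedgeDer_apply, Fin.sum_univ_succ, hsucc, hΘ]

end WedgeDerivation

section MultiDerivation

variable {p : ℕ}

def IsMultiDer.toAlternatingMap_s8 {θ : (Fin p → MPoly K ℓ) → MPoly K ℓ} (hθ : IsMultiDer θ) :
    MPoly K ℓ [⋀^Fin p]→ₗ[K] MPoly K ℓ where
  toFun := θ
  map_update_add' := by
    intro inst v s f g
    obtain rfl := Subsingleton.elim inst (instDecidableEqFin p)
    simpa using hθ.2.1 s v 1 f g
  map_update_smul' := by
    intro inst v s c f
    obtain rfl := Subsingleton.elim inst (instDecidableEqFin p)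
    have hzero : θ (update v s 0) = 0 := by simpa using hθ.2.2 s v 0 0
    simpa [hzero] using hθ.2.1 s v c f 0
  map_eq_zero_of_eq' v i j hv hij := hθ.1 v i j hij hv

theorem isMultiDer_of_isLeibnizInEachSlot {Θ : MPoly K ℓ [⋀^Fin p]→ₗ[K] MPoly K ℓ}
    (hΘ : IsLeibnizInEachSlot Θ) : IsMultiDer Θ :=
  ⟨fun v i j hij hv => Θ.map_eq_zero_of_eq v hv hij,
    fun s v a f g => by rw [Θ.map_update_add, Θ.map_update_smul], hΘ⟩

theorem InDp.wedgeDer {A : ArrData K ℓ} {m : A.ι → ℕ} {θ0 : Derivation K (MPoly K ℓ) (MPoly K ℓ)}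
    (hθ0 : θ0 ∈ Dmod A m) {θ : (Fin p → MPoly K ℓ) → MPoly K ℓ} (hθ : InDp A m θ) :
    InDp A m (wedgeDer θ0 hθ.1.toAlternatingMap_s8) :=
  ⟨isMultiDer_of_isLeibnizInEachSlot (isLeibnizInEachSlot_wedgeDer θ0 hθ.1.2.2),
    fun i => dvd_wedgeDer_update θ0 (hθ0 i trivial) (hθ.2 i)⟩

end MultiDerivation

theorem stmt8_general {K : Type} [Field K] {ℓ : ℕ} (A : ArrData K ℓ) (m : A.ι → ℕ)
    (i0 : A.ι)
    (θ0 : Derivation K (MPoly K ℓ) (MPoly K ℓ)) (hθ0 : θ0 ∈ Dmod A m)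
    (hgs : θ0 (A.α i0) = A.α i0 ^ m i0) :
    (∀ (p : ℕ) (θ : (Fin (p+2) → MPoly K ℓ) → MPoly K ℓ), InDp A m θ →
      ∀ v : Fin p → MPoly K ℓ, θ (Fin.cons (A.α i0) (Fin.cons (A.α i0) v)) = 0) ∧
    (∀ (p : ℕ) (θ : (Fin (p+1) → MPoly K ℓ) → MPoly K ℓ), InDp A m θ →
      (∀ v : Fin p → MPoly K ℓ, θ (Fin.cons (A.α i0) v) = 0) →
      ∃ η : (Fin (p+2) → MPoly K ℓ) → MPoly K ℓ, InDp A m η ∧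
        ∀ v : Fin (p+1) → MPoly K ℓ,
          η (Fin.cons (A.α i0) v) = A.α i0 ^ m i0 * θ v) ∧
    (∀ f : MPoly K ℓ, ∃ η ∈ Dmod A m, η (A.α i0) = A.α i0 ^ m i0 * f) := by
  refine ⟨fun p θ hθ v => hθ.1.1 _ 0 (succ 0) (succ_ne_zero 0).symm rfl, ?_, ?_⟩
  · intro p θ hθ hcontr
    refine ⟨_, hθ.wedgeDer hθ0, fun v => ?_⟩
    rw [wedgeDer_cons θ0 hcontr, hgs]
    rfl
  · intro f
    refine ⟨f • θ0, Submodule.smul_mem _ f hθ0, ?_⟩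
    rw [Derivation.smul_apply, smul_eq_mul, hgs, mul_comm]

/-- For a good summand `θ₀` to `i0`, the contraction maps
`∂θ = θ(α_{H₀},·,…,·)/α_{H₀}^{m₀}` satisfy `∂∘∂ = 0`, and the resulting complex
`0 → D^ℓ(A,m) → ⋯ → D^0(A,m) → 0` is acyclic (exact). -/
theorem stmt8 {K : Type} [Field K] {ℓ : ℕ} (A : ArrData K ℓ) (m : A.ι → ℕ)
    (hm : ∀ i, 0 < m i) (i0 : A.ι)
    (θ0 : Derivation K (MPoly K ℓ) (MPoly K ℓ)) (hθ0 : θ0 ∈ Dmod A m)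
    (hpd : pdegIs θ0 (m i0)) (hgs : θ0 (A.α i0) = A.α i0 ^ m i0) :
    (∀ (p : ℕ) (θ : (Fin (p+2) → MPoly K ℓ) → MPoly K ℓ), InDp A m θ →
      ∀ v : Fin p → MPoly K ℓ, θ (Fin.cons (A.α i0) (Fin.cons (A.α i0) v)) = 0) ∧
    (∀ (p : ℕ) (θ : (Fin (p+1) → MPoly K ℓ) → MPoly K ℓ), InDp A m θ →
      (∀ v : Fin p → MPoly K ℓ, θ (Fin.cons (A.α i0) v) = 0) →
      ∃ η : (Fin (p+2) → MPoly K ℓ) → MPoly K ℓ, InDp A m η ∧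
        ∀ v : Fin (p+1) → MPoly K ℓ,
          η (Fin.cons (A.α i0) v) = A.α i0 ^ m i0 * θ v) ∧
    (∀ f : MPoly K ℓ, ∃ η ∈ Dmod A m, η (A.α i0) = A.α i0 ^ m i0 * f) :=
  stmt8_general A m i0 θ0 hθ0 hgs
end
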